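/- Let n ≥ 2 and let p ∈ [0,1)^n sum to an integer k with 1 ≤ k ≤ n−1, with p_1 > 0. Setting s := ∑_{i=1}^{k}(1 − p_i), it holds that ∑_{A⊆{2,…,n−1}, |A|=k−1} ∏_{i∈A} p_i ∏_{i∈{2,…,n−1}∖A} (1−p_i) ≥ (1 − 2s) / (p_1 (1 − p_n)). (In probabilistic terms: P[|B̂| = k−1] ≥ (1−2s)/(p_1(1−p_n)), where B̂ is the Poisson trial on {2,…,n−1}.) -/

import Mathlib

open Finset

/-!
The sum on the right is at least its single term at `A = {2, …, k}`. Multiplied by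
`p₁ (1 - pₙ)`, this term becomes the probability that the Poisson trial on all of `{1, …, n}`
equals `{1, …, k}`. By the Weierstrass product inequality that probability is at least
`1 - ∑_{i ≤ k} (1 - pᵢ) - ∑_{i > k} pᵢ`, and the last sum is again `s` because `∑ pᵢ = k`. (Indices are 1-based here; in `Fin n`, `pᵢ` is `p ⟨i - 1, _⟩`.)
-/

theorem one_sub_sum_le_prod_one_sub {ι : Type*} (s : Finset ι) {x : ι → ℝ}
    (h0 : ∀ i ∈ s, 0 ≤ x i) (h1 : ∀ i ∈ s, x i ≤ 1) :
    1 - ∑ i ∈ s, x i ≤ ∏ i ∈ s, (1 - x i) := by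
  classical
  induction s using Finset.induction_on with
  | empty => simp
  | insert a s ha ih =>
    rw [sum_insert ha, prod_insert ha]
    have hprod :=
      ih (fun i hi => h0 i (mem_insert_of_mem hi)) fun i hi => h1 i (mem_insert_of_mem hi)
    have hsum : 0 ≤ ∑ i ∈ s, x i := sum_nonneg fun i hi => h0 i (mem_insert_of_mem hi)
    nlinarith [h0 a (mem_insert_self a s), h1 a (mem_insert_self a s)]

def poissonTrialProb {ι : Type*} [DecidableEq ι] (p : ι → ℝ) (S A : Finset ι) : ℝ :=
  (∏ i ∈ A, p i) * ∏ i ∈ S \ A, (1 - p i)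

section PoissonTrial

variable {ι : Type*} [DecidableEq ι] {p : ι → ℝ} {S A : Finset ι} {a : ι}

theorem poissonTrialProb_nonneg (h0 : ∀ i, 0 ≤ p i) (h1 : ∀ i, p i ≤ 1) :
    0 ≤ poissonTrialProb p S A :=
  mul_nonneg (prod_nonneg fun i _ => h0 i) (prod_nonneg fun i _ => sub_nonneg.2 (h1 i))

theorem poissonTrialProb_insert_insert (haS : a ∉ S) (haA : a ∉ A) :
    poissonTrialProb p (insert a S) (insert a A) = p a * poissonTrialProb p S A := by
  rw [poissonTrialProb, poissonTrialProb, prod_insert haA, insert_sdiff_insert,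
    sdiff_insert_of_notMem haS, mul_assoc]

theorem poissonTrialProb_insert (haS : a ∉ S) (haA : a ∉ A) :
    poissonTrialProb p (insert a S) A = (1 - p a) * poissonTrialProb p S A := by
  rw [poissonTrialProb, poissonTrialProb, insert_sdiff_of_notMem _ haA,
    prod_insert fun h => haS (mem_sdiff.1 h).1]
  ring

theorem one_sub_sum_le_poissonTrialProb (h0 : ∀ i, 0 ≤ p i) (h1 : ∀ i, p i ≤ 1) :
    1 - (∑ i ∈ A, (1 - p i) + ∑ i ∈ S \ A, p i) ≤ poissonTrialProb p S A := by
  have hA : 1 - ∑ i ∈ A, (1 - p i) ≤ ∏ i ∈ A, p i := by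
    simpa using one_sub_sum_le_prod_one_sub A (x := fun i => 1 - p i)
      (fun i _ => sub_nonneg.2 (h1 i)) fun i _ => by linarith [h0 i]
  have hSA := one_sub_sum_le_prod_one_sub (S \ A) (fun i _ => h0 i) fun i _ => h1 i
  have hA1 : ∏ i ∈ A, p i ≤ 1 := prod_le_one (fun i _ => h0 i) fun i _ => h1 i
  have hSA1 : ∏ i ∈ S \ A, (1 - p i) ≤ 1 :=
    prod_le_one (fun i _ => sub_nonneg.2 (h1 i)) fun i _ => by linarith [h0 i]
  -- `x * y ≥ x + y - 1` because `(1 - x) * (1 - y) ≥ 0`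
  rw [poissonTrialProb]
  nlinarith [mul_nonneg (sub_nonneg.2 hA1) (sub_nonneg.2 hSA1)]

end PoissonTrial

/-- `P[|B̂| = k−1] ≥ (1−2s)/(p_1(1−p_n))`, where `B̂` is the Poisson trial on
`{2,…,n−1}` and `s := ∑_{i=1}^{k}(1 − p_i)`. -/
theorem poisson_trial_prob_bound {n k : ℕ} (hn : 2 ≤ n) (hk1 : 1 ≤ k) (hkn : k ≤ n - 1)
    (p : Fin n → ℝ) (hp : ∀ i, 0 ≤ p i ∧ p i < 1) (hsum : ∑ i, p i = (k : ℝ)) :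
    (1 - 2 * ∑ i ∈ univ.filter (fun i : Fin n => i.val < k), (1 - p i)) /
        (p ⟨0, by omega⟩ * (1 - p ⟨n - 1, by omega⟩)) ≤
      ∑ A ∈ powersetCard (k - 1)
          (univ.filter fun i : Fin n => 0 < i.val ∧ i.val < n - 1),
        (∏ i ∈ A, p i) *
          ∏ i ∈ (univ.filter fun i : Fin n => 0 < i.val ∧ i.val < n - 1) \ A, (1 - p i) := by
  set first : Fin n := ⟨0, by omega⟩
  set last : Fin n := ⟨n - 1, by omega⟩
  set L := univ.filter fun i : Fin n => i.val < k
  set mid := univ.filter fun i : Fin n => 0 < i.val ∧ i.val < n - 1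
  set L' := univ.filter fun i : Fin n => 0 < i.val ∧ i.val < k
  have h0 i : 0 ≤ p i := (hp i).1
  have h1 i : p i ≤ 1 := (hp i).2.le
  have hfirst : first ∉ insert last mid := by simp [first, last, mid, Fin.ext_iff]; omega
  have hlast : last ∉ mid := by simp [last, mid]
  have hL : L = insert first L' := by ext i; simp [L, L', first, Fin.ext_iff]; omega
  have huniv : univ = insert first (insert last mid) := by
    ext i; simp [first, last, mid, Fin.ext_iff]; omega
  have hfirstL' : first ∉ L' := by simp [first, L']
  have hcardL : L.card = k := by rw [Fin.card_filter_val_lt]; omega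
  have hL'mid : L' ∈ powersetCard (k - 1) mid := by
    refine mem_powersetCard.2 ⟨fun i hi => ?_, ?_⟩
    · simp only [L', mid, mem_filter, mem_univ, true_and] at hi ⊢; omega
    · rw [hL, card_insert_of_notMem hfirstL'] at hcardL; omega
  have hs : ∑ i ∈ univ \ L, p i = ∑ i ∈ L, (1 - p i) := by
    rw [sum_sdiff_eq_sub (subset_univ L), hsum, sum_sub_distrib, sum_const, hcardL]
    simp
  have hprob :
      poissonTrialProb p univ L = p first * (1 - p last) * poissonTrialProb p mid L' := by
    have hL'sub := (mem_powersetCard.1 hL'mid).1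
    rw [huniv, hL, poissonTrialProb_insert_insert hfirst hfirstL',
      poissonTrialProb_insert hlast fun h => hlast (hL'sub h), mul_assoc]
  calc _ ≤ poissonTrialProb p mid L' := by
        refine div_le_of_le_mul₀ (mul_nonneg (h0 _) (sub_nonneg.2 (h1 _)))
          (poissonTrialProb_nonneg h0 h1) ?_
        have := one_sub_sum_le_poissonTrialProb (S := univ) (A := L) h0 h1
        rw [hs, hprob] at this
        linarith
    _ ≤ _ := single_le_sum (f := poissonTrialProb p mid)
        (fun A _ => poissonTrialProb_nonneg h0 h1) hL'mid
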